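/- (Lindblad inequality) Let Φ(ρ) = ∑ᵢ Kᵢ ρ Kᵢ† be a quantum channel with ∑ᵢ Kᵢ†Kᵢ = I, ρ a density matrix, ρ' = Φ(ρ), and σ the matrix with entries σ_{ij} = Tr(Kᵢ ρ Kⱼ†). Then |S(ρ') − S(ρ)| ≤ S(σ) ≤ S(ρ') + S(ρ). -/

import Mathlib

open Matrix
open scoped ComplexOrder

/-- Von Neumann entropy of a Hermitian matrix via its eigenvalues. -/
noncomputable def vnEntropy {n : Type*} [Fintype n] [DecidableEq n]
    {A : Matrix n n ℂ} (hA : A.IsHermitian) : ℝ :=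
  -∑ i, hA.eigenvalues i * Real.log (hA.eigenvalues i)

/-!
Write `ρ = Bᴴ B` and let `V = ∑ᵢ |i⟩ ⊗ Kᵢ`, an isometry because `∑ᵢ Kᵢᴴ Kᵢ = 1`. The state
`ω = V ρ Vᴴ` on `ℂᵏ ⊗ ℂᴺ` has partial traces `σ` and `ρ'`, and `ω = M Mᴴ` with `M = V Bᴴ`, so it
has the nonzero spectrum of `Mᴴ M = B Bᴴ`, i.e. of `ρ`. Subadditivity `S(ω) ≤ S(σ) + S(ρ')` and the
Araki–Lieb inequality `|S(σ) - S(ρ')| ≤ S(ω)` give the claim.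

Subadditivity: in the product of the eigenbases of the two marginals, the diagonal of `ω` is a
probability vector whose marginals are their eigenvalues. Its Shannon entropy dominates `S(ω)`
(concavity of `-x log x` against the doubly stochastic matrix `|Uᵢⱼ|²` of the change of basis)
and is dominated by the sum of the Shannon entropies of its marginals (Gibbs' inequality).
Araki–Lieb is subadditivity applied to the purification `M` of `ω`, regrouped as a state on the
second factor and the purifying system.
-/

open Polynomial Real
open scoped Kronecker MatrixOrder

theorem sum_negMulLog_le_sum_negMulLog_marginals {α β : Type*} [Fintype α] [Fintype β]
    (d : α × β → ℝ) (hd : ∀ t, 0 ≤ d t) (hsum : ∑ t, d t = 1) :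
    ∑ t, negMulLog (d t) ≤ ∑ a, negMulLog (∑ b, d (a, b)) + ∑ b, negMulLog (∑ a, d (a, b)) := by
  set q : α → ℝ := fun a => ∑ b, d (a, b)
  set r : β → ℝ := fun b => ∑ a, d (a, b)
  have hq : ∀ a b, d (a, b) ≤ q a := fun a b =>
    Finset.single_le_sum (fun b _ => hd (a, b)) (Finset.mem_univ b)
  have hr : ∀ a b, d (a, b) ≤ r b := fun a b =>
    Finset.single_le_sum (fun a _ => hd (a, b)) (Finset.mem_univ a)
  -- Gibbs' inequality against the product of the marginals, termwise from `log x ≤ x - 1`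
  have key : ∀ a b, negMulLog (d (a, b)) ≤
      -d (a, b) * log (q a) - d (a, b) * log (r b) + (q a * r b - d (a, b)) := by
    intro a b
    rcases (hd (a, b)).eq_or_lt with h0 | hpos
    · rw [← h0, negMulLog_zero]
      have := hd (a, b)
      nlinarith [hq a b, hr a b]
    have hqpos := hpos.trans_le (hq a b)
    have hrpos := hpos.trans_le (hr a b)
    have hlog := log_le_sub_one_of_pos (div_pos (mul_pos hqpos hrpos) hpos)
    rw [log_div (mul_pos hqpos hrpos).ne' hpos.ne', log_mul hqpos.ne' hrpos.ne'] at hlog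
    have := mul_le_mul_of_nonneg_left hlog hpos.le
    rw [mul_sub (d (a, b)) (_ / _), mul_div_cancel₀ _ hpos.ne'] at this
    rw [negMulLog]
    linarith
  have hq1 : ∑ a, q a = 1 := by rw [← hsum, Fintype.sum_prod_type]
  have hr1 : ∑ b, r b = 1 := by rw [← hsum, Fintype.sum_prod_type, Finset.sum_comm]
  calc ∑ t, negMulLog (d t) = ∑ a, ∑ b, negMulLog (d (a, b)) := Fintype.sum_prod_type _
    _ ≤ ∑ a, ∑ b, (-d (a, b) * log (q a) - d (a, b) * log (r b) + (q a * r b - d (a, b))) := by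
        gcongr with a _ b; exact key a b
    _ = ∑ a, negMulLog (q a) + ∑ b, negMulLog (r b) + ((∑ a, q a) * ∑ b, r b - ∑ t, d t) := by
        simp only [Finset.sum_add_distrib, Finset.sum_sub_distrib, Finset.sum_mul_sum,
          Fintype.sum_prod_type d]
        rw [Finset.sum_comm (f := fun a b => d (a, b) * log (r b))]
        simp only [negMulLog, neg_mul, Finset.sum_neg_distrib, ← Finset.sum_mul, q, r]
        ring
    _ = ∑ a, negMulLog (q a) + ∑ b, negMulLog (r b) := by rw [hq1, hr1, hsum]; ring

namespace Matrix

section PartialTrace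

variable {R α β : Type*} [Fintype α] [Fintype β]

def traceRight [AddCommMonoid R] (ω : Matrix (α × β) (α × β) R) : Matrix α α R :=
  of fun i j => ∑ b, ω (i, b) (j, b)

def traceLeft [AddCommMonoid R] (ω : Matrix (α × β) (α × β) R) : Matrix β β R :=
  of fun i j => ∑ a, ω (a, i) (a, j)

theorem trace_traceRight [AddCommMonoid R] (ω : Matrix (α × β) (α × β) R) :
    (traceRight ω).trace = ω.trace := by
  simp [trace, traceRight, Fintype.sum_prod_type]

variable [CommRing R] [StarRing R]

theorem traceRight_conjTranspose_kronecker_mul_mul [DecidableEq β] (V : Matrix α α R)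
    {Y : Matrix β β R} (hY : Y ∈ unitaryGroup β R) (ω : Matrix (α × β) (α × β) R) :
    traceRight ((V ⊗ₖ Y)ᴴ * ω * (V ⊗ₖ Y)) = Vᴴ * traceRight ω * V := by
  have hδ : ∀ j j', ∑ b, star (Y j b) * Y j' b = if j' = j then 1 else 0 := fun j j' => by
    simpa [mul_apply, one_apply, mul_comm] using
      congr_fun (congr_fun (mem_unitaryGroup_iff.mp hY) j') j
  ext a a'
  simp only [traceRight, of_apply, mul_apply, conjTranspose_apply, kroneckerMap_apply,
    Fintype.sum_prod_type, star_mul', Finset.sum_mul, Finset.mul_sum]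
  calc _ = ∑ i', ∑ j', ∑ i, ∑ j,
        star (V i a) * ω (i, j) (i', j') * V i' a' * ∑ b, star (Y j b) * Y j' b := by
        simp only [Finset.mul_sum]
        rw [Finset.sum_comm]; refine Finset.sum_congr rfl fun i' _ => ?_
        rw [Finset.sum_comm]; refine Finset.sum_congr rfl fun j' _ => ?_
        rw [Finset.sum_comm]; refine Finset.sum_congr rfl fun i _ => ?_
        rw [Finset.sum_comm]; refine Finset.sum_congr rfl fun j _ => ?_
        exact Finset.sum_congr rfl fun b _ => by ring
    _ = _ := by
        simp only [hδ, mul_ite, mul_one, mul_zero, Finset.sum_ite_eq, Finset.mem_univ, if_true]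
        exact Finset.sum_congr rfl fun i' _ => Finset.sum_comm

theorem traceLeft_conjTranspose_kronecker_mul_mul [DecidableEq α] {V : Matrix α α R}
    (hV : V ∈ unitaryGroup α R) (Y : Matrix β β R) (ω : Matrix (α × β) (α × β) R) :
    traceLeft ((V ⊗ₖ Y)ᴴ * ω * (V ⊗ₖ Y)) = Yᴴ * traceLeft ω * Y := by
  have hδ : ∀ i i', ∑ a, star (V i a) * V i' a = if i' = i then 1 else 0 := fun i i' => by
    simpa [mul_apply, one_apply, mul_comm] using
      congr_fun (congr_fun (mem_unitaryGroup_iff.mp hV) i') i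
  ext b b'
  simp only [traceLeft, of_apply, mul_apply, conjTranspose_apply, kroneckerMap_apply,
    Fintype.sum_prod_type, star_mul', Finset.sum_mul, Finset.mul_sum]
  calc _ = ∑ i', ∑ j', ∑ i, ∑ j,
        star (Y j b) * ω (i, j) (i', j') * Y j' b' * ∑ a, star (V i a) * V i' a := by
        simp only [Finset.mul_sum]
        rw [Finset.sum_comm]; refine Finset.sum_congr rfl fun i' _ => ?_
        rw [Finset.sum_comm]; refine Finset.sum_congr rfl fun j' _ => ?_
        rw [Finset.sum_comm]; refine Finset.sum_congr rfl fun i _ => ?_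
        rw [Finset.sum_comm]; refine Finset.sum_congr rfl fun j _ => ?_
        exact Finset.sum_congr rfl fun a _ => by ring
    _ = _ := by
        simp only [hδ, mul_ite, mul_one, mul_zero, Finset.sum_ite_irrel, Finset.sum_const_zero,
          Finset.sum_ite_eq, Finset.mem_univ, if_true]
        rw [Finset.sum_comm]
        exact Finset.sum_congr rfl fun j' _ => Finset.sum_comm

end PartialTrace

section Stinespring

variable {R ι m n : Type*} [CommSemiring R] [StarRing R]

-- The Stinespring isometry `∑ᵢ |i⟩ ⊗ Kᵢ` of a Kraus family `K`.
def stinespring (K : ι → Matrix m n R) : Matrix (ι × m) n R :=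
  of fun t x => K t.1 t.2 x

theorem conjTranspose_stinespring_mul_self [Fintype ι] [Fintype m] (K : ι → Matrix m n R) :
    (stinespring K)ᴴ * stinespring K = ∑ i, (K i)ᴴ * K i := by
  ext x y
  simp [stinespring, mul_apply, sum_apply, Fintype.sum_prod_type]

theorem stinespring_mul_mul_conjTranspose_apply [Fintype n] (K : ι → Matrix m n R)
    (X : Matrix n n R) (i j : ι) (a b : m) :
    (stinespring K * X * (stinespring K)ᴴ) (i, a) (j, b) = (K i * X * (K j)ᴴ) a b := by
  simp [stinespring, mul_apply]

theorem traceRight_stinespring_mul_mul_conjTranspose [Fintype m] [Fintype n]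
    (K : ι → Matrix m n R) (X : Matrix n n R) :
    traceRight (stinespring K * X * (stinespring K)ᴴ) = of fun i j => (K i * X * (K j)ᴴ).trace := by
  ext i j
  simp only [traceRight, of_apply, stinespring_mul_mul_conjTranspose_apply, trace]
  rfl

theorem traceLeft_stinespring_mul_mul_conjTranspose [Fintype ι] [Fintype n]
    (K : ι → Matrix m n R) (X : Matrix n n R) :
    traceLeft (stinespring K * X * (stinespring K)ᴴ) = ∑ i, K i * X * (K i)ᴴ := by
  ext a b
  simp only [traceLeft, of_apply, stinespring_mul_mul_conjTranspose_apply, sum_apply]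

end Stinespring

theorem sum_normSq_row_eq_one_of_mem_unitaryGroup {n : Type*} [Fintype n] [DecidableEq n]
    {U : Matrix n n ℂ} (hU : U ∈ unitaryGroup n ℂ) (i : n) : ∑ j, Complex.normSq (U i j) = 1 := by
  have h := congr_fun (congr_fun (mem_unitaryGroup_iff.mp hU) i) i
  simp only [mul_apply, star_apply, RCLike.star_def, Complex.mul_conj, one_apply_eq] at h
  exact_mod_cast h

theorem sum_normSq_col_eq_one_of_mem_unitaryGroup {n : Type*} [Fintype n] [DecidableEq n]
    {U : Matrix n n ℂ} (hU : U ∈ unitaryGroup n ℂ) (j : n) : ∑ i, Complex.normSq (U i j) = 1 := by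
  simpa using sum_normSq_row_eq_one_of_mem_unitaryGroup (Unitary.star_mem hU) j

theorem IsHermitian.conjTranspose_eigenvectorUnitary_mul_mul {𝕜 n : Type*} [RCLike 𝕜]
    [Fintype n] [DecidableEq n] {A : Matrix n n 𝕜} (hA : A.IsHermitian) :
    (hA.eigenvectorUnitary : Matrix n n 𝕜)ᴴ * A * (hA.eigenvectorUnitary : Matrix n n 𝕜) =
      diagonal (RCLike.ofReal ∘ hA.eigenvalues) := by
  simpa [star_eq_conjTranspose] using hA.conjStarAlgAut_star_eigenvectorUnitary

end Matrix

section Entropy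

variable {m n : Type*} [Fintype m] [Fintype n] [DecidableEq m] [DecidableEq n]

theorem vnEntropy_eq_sum_negMulLog {A : Matrix n n ℂ} (hA : A.IsHermitian) :
    vnEntropy hA = ∑ i, negMulLog (hA.eigenvalues i) := by
  simp [vnEntropy, negMulLog]

theorem vnEntropy_congr {A B : Matrix n n ℂ} (h : A = B) (hA : A.IsHermitian)
    (hB : B.IsHermitian) : vnEntropy hA = vnEntropy hB := by
  subst h; rfl

theorem vnEntropy_eq_sum_roots_charpoly {A : Matrix n n ℂ} (hA : A.IsHermitian) :
    vnEntropy hA = (A.charpoly.roots.map fun z => negMulLog z.re).sum := by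
  rw [vnEntropy_eq_sum_negMulLog, hA.roots_charpoly_eq_eigenvalues, Multiset.map_map]
  rfl

theorem vnEntropy_eq_of_X_pow_mul_charpoly_eq {A : Matrix m m ℂ} {B : Matrix n n ℂ}
    (hA : A.IsHermitian) (hB : B.IsHermitian)
    (h : X ^ Fintype.card n * A.charpoly = X ^ Fintype.card m * B.charpoly) :
    vnEntropy hA = vnEntropy hB := by
  have hroots := congrArg (fun p : ℂ[X] => (p.roots.map fun z => negMulLog z.re).sum) h
  simp only [roots_mul (mul_ne_zero (pow_ne_zero _ X_ne_zero) (charpoly_monic _).ne_zero),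
    roots_X_pow, Multiset.map_add, Multiset.sum_add, Multiset.map_nsmul, Multiset.sum_nsmul,
    Multiset.map_singleton, Multiset.sum_singleton, Complex.zero_re, negMulLog_zero, smul_zero,
    zero_add] at hroots
  simpa [vnEntropy_eq_sum_roots_charpoly] using hroots

theorem vnEntropy_mul_conjTranspose_eq (M : Matrix m n ℂ) (h₁ : (M * Mᴴ).IsHermitian)
    (h₂ : (Mᴴ * M).IsHermitian) : vnEntropy h₁ = vnEntropy h₂ :=
  vnEntropy_eq_of_X_pow_mul_charpoly_eq h₁ h₂ (charpoly_mul_comm' M Mᴴ)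

theorem vnEntropy_transpose {A : Matrix n n ℂ} (hA : A.IsHermitian) (hAt : Aᵀ.IsHermitian) :
    vnEntropy hAt = vnEntropy hA :=
  vnEntropy_eq_of_X_pow_mul_charpoly_eq hAt hA (by rw [charpoly_transpose])

theorem vnEntropy_conjTranspose_mul_mul {A U : Matrix n n ℂ} (hA : A.IsHermitian)
    (hU : U ∈ unitaryGroup n ℂ) (h : (Uᴴ * A * U).IsHermitian) : vnEntropy h = vnEntropy hA :=
  vnEntropy_eq_of_X_pow_mul_charpoly_eq h hA (by
    rw [charpoly_mul_comm, ← Matrix.mul_assoc, ← star_eq_conjTranspose,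
      mem_unitaryGroup_iff.mp hU, Matrix.one_mul])

theorem Matrix.PosSemidef.vnEntropy_le_sum_negMulLog_diag {A : Matrix n n ℂ}
    (hA : A.PosSemidef) : vnEntropy hA.1 ≤ ∑ i, negMulLog (A i i).re := by
  set U := hA.1.eigenvectorUnitary
  set c : n → n → ℝ := fun i j => Complex.normSq ((U : Matrix n n ℂ) i j)
  have hdiag : ∀ i, (A i i).re = ∑ j, c i j * hA.1.eigenvalues j := by
    intro i
    conv_lhs => rw [hA.1.spectral_theorem]
    rw [Unitary.conjStarAlgAut_apply, mul_apply, Complex.re_sum]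
    refine Finset.sum_congr rfl fun j _ => ?_
    simp only [mul_diagonal, star_apply, RCLike.star_def]
    rw [mul_right_comm, Complex.mul_conj]
    simp [c, -IsHermitian.eigenvectorUnitary_apply, U]
  calc vnEntropy hA.1 = ∑ i, ∑ j, c j i * negMulLog (hA.1.eigenvalues i) := by
        simp only [vnEntropy_eq_sum_negMulLog, ← Finset.sum_mul,
          sum_normSq_col_eq_one_of_mem_unitaryGroup U.2, one_mul, c]
    _ = ∑ i, ∑ j, c i j * negMulLog (hA.1.eigenvalues j) := Finset.sum_comm
    _ ≤ ∑ i, negMulLog (A i i).re := by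
        gcongr with i
        rw [hdiag]
        exact concaveOn_negMulLog.le_map_sum (fun j _ => Complex.normSq_nonneg _)
          (sum_normSq_row_eq_one_of_mem_unitaryGroup U.2 i) fun j _ => hA.eigenvalues_nonneg j

end Entropy

section Subadditivity

variable {α β γ : Type*} [Fintype α] [Fintype β] [Fintype γ] [DecidableEq α] [DecidableEq β]
  [DecidableEq γ]

theorem vnEntropy_le_add_of_traceRight_of_traceLeft {ω : Matrix (α × β) (α × β) ℂ}
    (hω : ω.PosSemidef) (htr : ω.trace = 1) {A : Matrix α α ℂ} {B : Matrix β β ℂ}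
    (hA : A.IsHermitian) (hB : B.IsHermitian) (hωA : traceRight ω = A) (hωB : traceLeft ω = B) :
    vnEntropy hω.1 ≤ vnEntropy hA + vnEntropy hB := by
  subst hωA hωB
  set V := hA.eigenvectorUnitary
  set Y := hB.eigenvectorUnitary
  set W := (V : Matrix α α ℂ) ⊗ₖ (Y : Matrix β β ℂ)
  have hW : W ∈ unitaryGroup (α × β) ℂ := kronecker_mem_unitary V.2 Y.2
  set ω' := Wᴴ * ω * W
  have hω' : ω'.PosSemidef := hω.conjTranspose_mul_mul_same W
  -- the diagonal of `ω` in the product of the eigenbases of its marginals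
  set d : α × β → ℝ := fun t => (ω' t t).re
  have hd_nonneg : ∀ t, 0 ≤ d t := fun t => (Complex.nonneg_iff.mp hω'.diag_nonneg).1
  have hd_sum : ∑ t, d t = 1 := by
    rw [← Complex.re_sum, show ∑ t, ω' t t = ω'.trace from rfl, trace_mul_cycle,
      ← star_eq_conjTranspose, mem_unitaryGroup_iff.mp hW, Matrix.one_mul, htr, Complex.one_re]
  have hdA : ∀ a, ∑ b, d (a, b) = hA.eigenvalues a := by
    intro a
    have := congr_fun (congr_fun
      (traceRight_conjTranspose_kronecker_mul_mul (V : Matrix α α ℂ) Y.2 ω) a) a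
    rw [hA.conjTranspose_eigenvectorUnitary_mul_mul, diagonal_apply_eq] at this
    simpa [traceRight, d, Complex.re_sum] using congrArg Complex.re this
  have hdB : ∀ b, ∑ a, d (a, b) = hB.eigenvalues b := by
    intro b
    have := congr_fun (congr_fun
      (traceLeft_conjTranspose_kronecker_mul_mul V.2 (Y : Matrix β β ℂ) ω) b) b
    rw [hB.conjTranspose_eigenvectorUnitary_mul_mul, diagonal_apply_eq] at this
    simpa [traceLeft, d, Complex.re_sum] using congrArg Complex.re this
  calc vnEntropy hω.1 = vnEntropy hω'.1 := (vnEntropy_conjTranspose_mul_mul hω.1 hW hω'.1).symm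
    _ ≤ ∑ t, negMulLog (d t) := hω'.vnEntropy_le_sum_negMulLog_diag
    _ ≤ ∑ a, negMulLog (∑ b, d (a, b)) + ∑ b, negMulLog (∑ a, d (a, b)) :=
        sum_negMulLog_le_sum_negMulLog_marginals d hd_nonneg hd_sum
    _ = vnEntropy hA + vnEntropy hB := by simp only [hdA, hdB, vnEntropy_eq_sum_negMulLog]

theorem vnEntropy_traceRight_le_add (M : Matrix (α × β) γ ℂ) (htr : (M * Mᴴ).trace = 1)
    {A : Matrix α α ℂ} {B : Matrix β β ℂ} (hA : A.IsHermitian) (hB : B.IsHermitian)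
    (hMA : traceRight (M * Mᴴ) = A) (hMB : traceLeft (M * Mᴴ) = B) :
    vnEntropy hA ≤ vnEntropy hB + vnEntropy (isHermitian_conjTranspose_mul_self M) := by
  subst hMA hMB
  -- the purification `M` of `M * Mᴴ`, read as a map from `α` to `β × γ`
  set P : Matrix (β × γ) α ℂ := of fun t a => star (M (a, t.1) t.2)
  have hPP : Pᴴ * P = traceRight (M * Mᴴ) := by
    ext a a'
    simp [P, traceRight, mul_apply, Fintype.sum_prod_type]
  have hPR : traceRight (P * Pᴴ) = (traceLeft (M * Mᴴ))ᵀ := by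
    ext b b'
    simp only [traceRight, traceLeft, P, of_apply, transpose_apply, mul_apply,
      conjTranspose_apply, RCLike.star_def, RingHomCompTriple.comp_apply, RingHom.id_apply,
      mul_comm]
    exact Finset.sum_comm
  have hPL : traceLeft (P * Pᴴ) = Mᴴ * M := by
    ext c c'
    simp only [traceLeft, P, of_apply, mul_apply, conjTranspose_apply, RCLike.star_def,
      RingHomCompTriple.comp_apply, RingHom.id_apply, Fintype.sum_prod_type]
    exact Finset.sum_comm
  have htrP : (P * Pᴴ).trace = 1 := by rw [trace_mul_comm, hPP, trace_traceRight, htr]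
  calc vnEntropy hA = vnEntropy (isHermitian_conjTranspose_mul_self P) :=
        vnEntropy_congr hPP.symm _ _
    _ = vnEntropy (posSemidef_self_mul_conjTranspose P).1 :=
        (vnEntropy_mul_conjTranspose_eq P _ _).symm
    _ ≤ vnEntropy hB.transpose + vnEntropy (isHermitian_conjTranspose_mul_self M) :=
        vnEntropy_le_add_of_traceRight_of_traceLeft (posSemidef_self_mul_conjTranspose P) htrP
          _ _ hPR hPL
    _ = _ := by rw [vnEntropy_transpose]

theorem vnEntropy_traceLeft_le_add (M : Matrix (α × β) γ ℂ) (htr : (M * Mᴴ).trace = 1)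
    {A : Matrix α α ℂ} {B : Matrix β β ℂ} (hA : A.IsHermitian) (hB : B.IsHermitian)
    (hMA : traceRight (M * Mᴴ) = A) (hMB : traceLeft (M * Mᴴ) = B) :
    vnEntropy hB ≤ vnEntropy hA + vnEntropy (isHermitian_conjTranspose_mul_self M) := by
  set M' : Matrix (β × α) γ ℂ := M.submatrix Prod.swap id
  have hM' : M'ᴴ * M' = Mᴴ * M := by
    ext c c'
    simp only [M', mul_apply, conjTranspose_apply, submatrix_apply, id]
    exact Fintype.sum_equiv (Equiv.prodComm _ _) _ _ fun _ => rfl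
  have hM'M' : M' * M'ᴴ = (M * Mᴴ).submatrix Prod.swap Prod.swap := by
    ext s t
    simp [M', mul_apply]
  have htr' : (M' * M'ᴴ).trace = 1 := by rw [trace_mul_comm, hM', trace_mul_comm, htr]
  have h := vnEntropy_traceRight_le_add M' htr' hB hA
    (by rw [hM'M', ← hMB]; rfl) (by rw [hM'M', ← hMA]; rfl)
  rwa [vnEntropy_congr hM' _ (isHermitian_conjTranspose_mul_self M)] at h

end Subadditivity

/-- Lindblad inequality: for a channel `Φ(ρ) = ∑ Kᵢ ρ Kᵢᴴ` with output
`ρ' = Φ(ρ)` and correlation matrix `σᵢⱼ = Tr(Kᵢ ρ Kⱼᴴ)`,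
`|S(ρ') − S(ρ)| ≤ S(σ) ≤ S(ρ') + S(ρ)`. -/
theorem lindblad_inequality {k N : ℕ}
    (K : Fin k → Matrix (Fin N) (Fin N) ℂ)
    (hK : ∑ i, (K i)ᴴ * K i = 1)
    (ρ : Matrix (Fin N) (Fin N) ℂ) (hρ : ρ.PosSemidef) (hρtr : ρ.trace = 1)
    (ρ' : Matrix (Fin N) (Fin N) ℂ)
    (hρ'def : ρ' = ∑ i, K i * ρ * (K i)ᴴ) (hρ' : ρ'.IsHermitian)
    (σ : Matrix (Fin k) (Fin k) ℂ)
    (hσdef : ∀ i j, σ i j = (K i * ρ * (K j)ᴴ).trace)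
    (hσ : σ.IsHermitian) :
    |vnEntropy hρ' - vnEntropy hρ.isHermitian| ≤ vnEntropy hσ ∧
    vnEntropy hσ ≤ vnEntropy hρ' + vnEntropy hρ.isHermitian := by
  obtain ⟨B, rfl⟩ : ∃ B, ρ = Bᴴ * B := CStarAlgebra.nonneg_iff_eq_star_mul_self.mp hρ.nonneg
  set V := stinespring K
  set M := V * Bᴴ
  have hMM : M * Mᴴ = V * (Bᴴ * B) * Vᴴ := by
    simp only [M, conjTranspose_mul, conjTranspose_conjTranspose, Matrix.mul_assoc]
  have hMσ : traceRight (M * Mᴴ) = σ := by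
    rw [hMM, traceRight_stinespring_mul_mul_conjTranspose]; ext i j; exact (hσdef i j).symm
  have hMρ' : traceLeft (M * Mᴴ) = ρ' := by
    rw [hMM, traceLeft_stinespring_mul_mul_conjTranspose, hρ'def]
  have hMρ : Mᴴ * M = B * Bᴴ := by
    simp only [M, conjTranspose_mul, conjTranspose_conjTranspose, Matrix.mul_assoc]
    rw [← Matrix.mul_assoc Vᴴ, conjTranspose_stinespring_mul_self, hK, Matrix.one_mul]
  have hSρ : vnEntropy (isHermitian_conjTranspose_mul_self M) = vnEntropy hρ.isHermitian := by
    rw [vnEntropy_congr hMρ _ (isHermitian_mul_conjTranspose_self B),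
      vnEntropy_mul_conjTranspose_eq]
  have htr : (M * Mᴴ).trace = 1 := by rw [trace_mul_comm, hMρ, trace_mul_comm, hρtr]
  have hSA := vnEntropy_le_add_of_traceRight_of_traceLeft
    (posSemidef_self_mul_conjTranspose M) htr hσ hρ' hMσ hMρ'
  have hAL := vnEntropy_traceRight_le_add M htr hσ hρ' hMσ hMρ'
  have hAL' := vnEntropy_traceLeft_le_add M htr hσ hρ' hMσ hMρ'
  rw [vnEntropy_mul_conjTranspose_eq M _ (isHermitian_conjTranspose_mul_self M)] at hSA
  rw [hSρ] at hSA hAL hAL'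
  exact ⟨abs_sub_le_iff.mpr ⟨by linarith, by linarith⟩, hAL⟩
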